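/- (Lemma 2.1(i), sufficient decrease) For every k ≥ 1, ψ(x^k, x^{k-1}, ε^k) − ψ(x^{k+1}, x^k, ε^{k+1}) ≥ (β/2)(1 − ᾱ²) ‖x^k − x^{k-1}‖₂². -/

import Mathlib

open Filter
open scoped BigOperators InnerProductSpace

noncomputable section

/-- Real n-dimensional Euclidean space. -/
abbrev Vec (n : ℕ) := EuclideanSpace ℝ (Fin n)

/-- The smoothed objective `F(x, ε) = f(x) + λ ∑ᵢ (|xᵢ| + εᵢ)^p`. -/
def Fobj (n : ℕ) (p lam : ℝ) (f : Vec n → ℝ) (z : Vec n) (ε : Fin n → ℝ) : ℝ :=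
  f z + lam * ∑ i, (|z i| + ε i) ^ p

/-- The merit function `ψ(x, y, ε) = F(x, ε) + (β/2)‖x − y‖²`. -/
def psiObj (n : ℕ) (p lam β : ℝ) (f : Vec n → ℝ) (z y : Vec n) (ε : Fin n → ℝ) : ℝ :=
  Fobj n p lam f z ε + β / 2 * ‖z - y‖ ^ 2

/-- The weighted-ℓ₁ subproblem objective at iteration `k`:
`⟨∇f(yₖ), z⟩ + (β/2)‖z − yₖ‖² + λ ∑ᵢ wᵢᵏ |zᵢ|` with `wᵢᵏ = p(|xᵢᵏ| + εᵢᵏ)^{p−1}`. -/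
def subObj (n : ℕ) (p lam β : ℝ) (f : Vec n → ℝ) (xk yk : Vec n) (εk : Fin n → ℝ)
    (z : Vec n) : ℝ :=
  ⟪gradient f yk, z⟫_ℝ + β / 2 * ‖z - yk‖ ^ 2
    + lam * ∑ i, (p * (|xk i| + εk i) ^ (p - 1)) * |z i|

/-- All the hypotheses of the EIRL1 algorithm (Algorithm 1) together with
Assumption 2.1.  The convention `x⁻¹ = x⁰` is encoded through truncated
subtraction on ℕ (`x (k-1) = x 0` for `k = 0`). -/
structure EIRL1 (n : ℕ) (p lam β Lf μ αbar : ℝ) (f : Vec n → ℝ)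
    (x y : ℕ → Vec n) (ε : ℕ → Fin n → ℝ) (α : ℕ → ℝ) : Prop where
  hn : 1 ≤ n
  hp0 : 0 < p
  hp1 : p < 1
  hlam : 0 < lam
  hμ0 : 0 < μ
  hμ1 : μ < 1
  hLf : 0 ≤ Lf
  hβ : Lf < β
  hconv : ConvexOn ℝ Set.univ f
  hdiff : ContDiff ℝ 1 f
  hlip : ∀ a b, ‖gradient f a - gradient f b‖ ≤ Lf * ‖a - b‖
  hαbar0 : 0 ≤ αbar
  hαbar1 : αbar < 1
  hα0 : ∀ k, 0 ≤ α k
  hα1 : ∀ k, α k ≤ αbar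
  hε0 : ∀ i, 0 < ε 0 i
  hεpos : ∀ k i, 0 < ε (k + 1) i
  hεdec : ∀ k i, ε (k + 1) i ≤ μ * ε k i
  hy : ∀ k, y k = x k + α k • (x k - x (k - 1))
  hmin : ∀ k z, z ≠ x (k + 1) →
    subObj n p lam β f (x k) (y k) (ε k) (x (k + 1)) < subObj n p lam β f (x k) (y k) (ε k) z
  hlevel : Bornology.IsBounded {z : Vec n | Fobj n p lam f z 0 ≤ Fobj n p lam f (x 0) (ε 0)}

/-!
The subproblem objective is `β`-strongly convex, so its minimizer `x^{k+1}` beats `x^k` by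
`(β/2)‖x^{k+1} - x^k‖²`. The descent lemma (using `L_f ≤ β`) and the gradient inequality of the
convex `f` at `y^k` turn this into a comparison of `f(x^{k+1})` with `f(x^k)`, up to the
extrapolation error `(β/2)‖x^k - y^k‖² ≤ (β/2)ᾱ²‖x^k - x^{k-1}‖²`. Finally, the tangent-line
inequality of the concave `t ↦ t^p` at `|x^k_i| + ε^k_i`, together with `ε^{k+1} ≤ ε^k`, shows
that the weighted-ℓ₁ term majorizes the change of the smoothed penalty.
-/

open Set AffineMap Topology

section InnerProductSpace

variable {E : Type*} [NormedAddCommGroup E] [InnerProductSpace ℝ E]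

lemma norm_smul_add_smul_sq {a b : ℝ} (hab : a + b = 1) (u v : E) :
    ‖a • u + b • v‖ ^ 2 = a * ‖u‖ ^ 2 + b * ‖v‖ ^ 2 - a * b * ‖u - v‖ ^ 2 := by
  rw [norm_add_sq_real, norm_sub_sq_real, norm_smul, norm_smul, real_inner_smul_left,
    real_inner_smul_right, mul_pow, mul_pow, Real.norm_eq_abs, Real.norm_eq_abs, sq_abs, sq_abs]
  obtain rfl := eq_sub_of_add_eq hab
  ring

lemma ConvexOn.strongConvexOn_add_sq_norm_sub {s : Set E} {g : E → ℝ} (hg : ConvexOn ℝ s g)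
    (m : ℝ) (y : E) : StrongConvexOn s m fun u ↦ g u + m / 2 * ‖u - y‖ ^ 2 := by
  refine ⟨hg.1, fun u hu v hv a b ha hb hab ↦ ?_⟩
  have hsplit : a • u + b • v - y = a • (u - y) + b • (v - y) := by
    calc a • u + b • v - y = a • u + b • v - (a + b) • y := by rw [hab, one_smul]
      _ = a • (u - y) + b • (v - y) := by module
  have hg' := hg.2 hu hv ha hb hab
  beta_reduce
  rw [hsplit, norm_smul_add_smul_sq hab, sub_sub_sub_cancel_right]
  simp only [smul_eq_mul] at hg' ⊢
  linarith [hg']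

lemma StrongConvexOn.add_sq_norm_sub_le_of_isMinOn {s : Set E} {m : ℝ} {h : E → ℝ} {x z : E}
    (hh : StrongConvexOn s m h) (hmin : IsMinOn h s x) (hx : x ∈ s) (hz : z ∈ s) :
    h x + m / 2 * ‖z - x‖ ^ 2 ≤ h z := by
  have hshrink : ∀ t ∈ Ioo (0 : ℝ) 1, h x + m / 2 * (1 - t) * ‖z - x‖ ^ 2 ≤ h z := by
    rintro t ⟨ht0, ht1⟩
    have hconv := hh.2 hx hz (sub_nonneg.2 ht1.le) ht0.le (sub_add_cancel 1 t)
    have hmid : h x ≤ h ((1 - t) • x + t • z) :=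
      hmin (hh.1 hx hz (sub_nonneg.2 ht1.le) ht0.le (sub_add_cancel 1 t))
    rw [norm_sub_rev] at hconv
    simp only [smul_eq_mul] at hconv
    refine le_of_mul_le_mul_left ?_ ht0
    linarith [hconv, hmid]
  have hlim : Tendsto (fun t : ℝ ↦ h x + m / 2 * (1 - t) * ‖z - x‖ ^ 2) (𝓝[>] 0)
      (𝓝 (h x + m / 2 * ‖z - x‖ ^ 2)) := by
    have : Continuous fun t : ℝ ↦ h x + m / 2 * (1 - t) * ‖z - x‖ ^ 2 := by fun_prop
    simpa using (this.tendsto 0).mono_left nhdsWithin_le_nhds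
  exact le_of_tendsto hlim (eventually_of_mem (Ioo_mem_nhdsGT zero_lt_one) hshrink)

variable [CompleteSpace E]

lemma DifferentiableAt.hasDerivAt_comp_lineMap {f : E → ℝ} {a b : E} {t : ℝ}
    (hf : DifferentiableAt ℝ f (lineMap a b t)) :
    HasDerivAt (fun s ↦ f (lineMap a b s)) ⟪gradient f (lineMap a b t), b - a⟫_ℝ t := by
  have hgrad := hf.hasGradientAt
  rw [hasGradientAt_iff_hasFDerivAt] at hgrad
  have := hgrad.comp_hasDerivAt t hasDerivAt_lineMap
  rwa [Function.comp_def, InnerProductSpace.toDual_apply_apply] at this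

lemma ConvexOn.add_inner_gradient_le {f : E → ℝ} (hconv : ConvexOn ℝ univ f) {a : E}
    (hf : DifferentiableAt ℝ f a) (b : E) : f a + ⟪gradient f a, b - a⟫_ℝ ≤ f b := by
  have hline : ConvexOn ℝ univ fun t : ℝ ↦ f (lineMap a b t) := by
    simpa [Function.comp_def] using hconv.comp_affineMap (lineMap a b)
  have hderiv := (lineMap_apply_zero a b (k := ℝ) ▸ hf).hasDerivAt_comp_lineMap
  have := hline.le_slope_of_hasDerivAt (mem_univ 0) (mem_univ 1) zero_lt_one hderiv
  simp only [slope_def_field, lineMap_apply_zero, lineMap_apply_one] at this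
  linarith

lemma Differentiable.le_add_inner_gradient_add_sq {f : E → ℝ} (hf : Differentiable ℝ f) {L : ℝ}
    (hlip : ∀ a b, ‖gradient f a - gradient f b‖ ≤ L * ‖a - b‖) (a b : E) :
    f b ≤ f a + ⟪gradient f a, b - a⟫_ℝ + L / 2 * ‖b - a‖ ^ 2 := by
  set c := ⟪gradient f a, b - a⟫_ℝ
  set d := ‖b - a‖ ^ 2
  have hline : ∀ t : ℝ, HasDerivAt (fun s ↦ f (lineMap a b s))
      ⟪gradient f (lineMap a b t), b - a⟫_ℝ t := fun t ↦ (hf _).hasDerivAt_comp_lineMap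
  have hquad : ∀ t : ℝ, HasDerivAt (fun s ↦ f a + s * c + L / 2 * d * s ^ 2) (c + L * d * t) t := by
    intro t
    have := (((hasDerivAt_id' t).mul_const c).const_add (f a)).fun_add
      ((hasDerivAt_pow 2 t).const_mul (L / 2 * d))
    exact this.congr_deriv (by norm_num; ring)
  have hbound : ∀ t ∈ Ico (0 : ℝ) 1, ⟪gradient f (lineMap a b t), b - a⟫_ℝ ≤ c + L * d * t := by
    rintro t ⟨ht0, -⟩
    have hstep : ‖lineMap a b t - a‖ = t * ‖b - a‖ := by
      rw [lineMap_apply_module', add_sub_cancel_right, norm_smul, Real.norm_of_nonneg ht0]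
    calc ⟪gradient f (lineMap a b t), b - a⟫_ℝ
        = c + ⟪gradient f (lineMap a b t) - gradient f a, b - a⟫_ℝ := by
          rw [inner_sub_left]; ring
      _ ≤ c + ‖gradient f (lineMap a b t) - gradient f a‖ * ‖b - a‖ := by
          gcongr; exact real_inner_le_norm _ _
      _ ≤ c + L * (t * ‖b - a‖) * ‖b - a‖ := by
          gcongr; exact hstep ▸ hlip _ _
      _ = c + L * d * t := by ring
  have := image_le_of_deriv_right_le_deriv_boundary
    (fun t _ ↦ (hline t).continuousAt.continuousWithinAt) (fun t _ ↦ (hline t).hasDerivWithinAt)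
    (by simp) (fun t _ ↦ (hquad t).continuousAt.continuousWithinAt)
    (fun t _ ↦ (hquad t).hasDerivWithinAt) hbound (right_mem_Icc.2 zero_le_one)
  simpa using this

end InnerProductSpace

lemma Real.rpow_le_rpow_add_mul_sub {p : ℝ} (hp0 : 0 ≤ p) (hp1 : p ≤ 1) {a b : ℝ} (ha : 0 < a)
    (hb : 0 ≤ b) : b ^ p ≤ a ^ p + p * a ^ (p - 1) * (b - a) := by
  have hbern := rpow_one_add_le_one_add_mul_self
    (by linarith [div_nonneg hb ha.le] : -1 ≤ b / a - 1) hp0 hp1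
  rw [add_sub_cancel, Real.div_rpow hb ha.le, div_le_iff₀ (Real.rpow_pos_of_pos ha p)] at hbern
  calc b ^ p ≤ (1 + p * (b / a - 1)) * a ^ p := hbern
    _ = a ^ p + p * a ^ (p - 1) * (b - a) := by
      rw [Real.rpow_sub ha, Real.rpow_one]; field_simp

lemma convexOn_inner_add_weighted_abs_sum {ι : Type*} [Fintype ι] (g : EuclideanSpace ℝ ι)
    {lam : ℝ} (hlam : 0 ≤ lam) {w : ι → ℝ} (hw : ∀ i, 0 ≤ w i) :
    ConvexOn ℝ univ fun u : EuclideanSpace ℝ ι ↦ ⟪g, u⟫_ℝ + lam * ∑ i, w i * |u i| := by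
  refine ⟨convex_univ, fun u _ v _ a b ha hb _ ↦ ?_⟩
  have hsum : ∑ i, w i * |(a • u + b • v) i|
      ≤ a * ∑ i, w i * |u i| + b * ∑ i, w i * |v i| := by
    rw [Finset.mul_sum, Finset.mul_sum, ← Finset.sum_add_distrib]
    refine Finset.sum_le_sum fun i _ ↦ ?_
    have habs : |a * u i + b * v i| ≤ a * |u i| + b * |v i| := by
      simpa [abs_mul, abs_of_nonneg ha, abs_of_nonneg hb] using abs_add_le (a * u i) (b * v i)
    simp only [PiLp.add_apply, PiLp.smul_apply, smul_eq_mul]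
    linarith [mul_le_mul_of_nonneg_left habs (hw i)]
  simp only [smul_eq_mul, inner_add_right, real_inner_smul_right]
  linarith [mul_le_mul_of_nonneg_left hsum hlam]

lemma subObj_add_sq_norm_sub_le {n : ℕ} {p lam β : ℝ} {f : Vec n → ℝ} {xk yk xs : Vec n}
    {εk : Fin n → ℝ} (hp : 0 ≤ p) (hlam : 0 ≤ lam) (hε : ∀ i, 0 ≤ εk i)
    (hmin : ∀ z, subObj n p lam β f xk yk εk xs ≤ subObj n p lam β f xk yk εk z) (z : Vec n) :
    subObj n p lam β f xk yk εk xs + β / 2 * ‖z - xs‖ ^ 2 ≤ subObj n p lam β f xk yk εk z := by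
  have hw : ∀ i, 0 ≤ p * (|xk i| + εk i) ^ (p - 1) := fun i ↦
    mul_nonneg hp (Real.rpow_nonneg (add_nonneg (abs_nonneg _) (hε i)) _)
  have hstrong := (convexOn_inner_add_weighted_abs_sum (gradient f yk) hlam hw)
    |>.strongConvexOn_add_sq_norm_sub β yk
  have hsub : (fun u ↦ ⟪gradient f yk, u⟫_ℝ + lam * ∑ i, p * (|xk i| + εk i) ^ (p - 1) * |u i|
      + β / 2 * ‖u - yk‖ ^ 2) = subObj n p lam β f xk yk εk := by
    funext u; simp only [subObj]; ring
  rw [hsub] at hstrong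
  exact hstrong.add_sq_norm_sub_le_of_isMinOn (isMinOn_univ_iff.2 hmin) (mem_univ _) (mem_univ z)

lemma sum_rpow_abs_add_le {ι : Type*} [Fintype ι] {p : ℝ} (hp0 : 0 ≤ p) (hp1 : p ≤ 1)
    {u v ε ε' : ι → ℝ} (hε : ∀ i, 0 < ε i) (hε' : ∀ i, 0 ≤ ε' i) (hle : ∀ i, ε' i ≤ ε i) :
    ∑ i, (|v i| + ε' i) ^ p ≤ ∑ i, (|u i| + ε i) ^ p
      + (∑ i, p * (|u i| + ε i) ^ (p - 1) * |v i| - ∑ i, p * (|u i| + ε i) ^ (p - 1) * |u i|) := by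
  rw [← Finset.sum_sub_distrib, ← Finset.sum_add_distrib]
  refine Finset.sum_le_sum fun i _ ↦ ?_
  have hpos : 0 < |u i| + ε i := add_pos_of_nonneg_of_pos (abs_nonneg _) (hε i)
  have hw : 0 ≤ p * (|u i| + ε i) ^ (p - 1) := mul_nonneg hp0 (Real.rpow_nonneg hpos.le _)
  have htangent := Real.rpow_le_rpow_add_mul_sub hp0 hp1 hpos
    (add_nonneg (abs_nonneg (v i)) (hε' i))
  linarith [mul_le_mul_of_nonneg_left (hle i) hw]

namespace EIRL1

variable {n : ℕ} {p lam β Lf μ αbar : ℝ} {f : Vec n → ℝ} {x y : ℕ → Vec n} {ε : ℕ → Fin n → ℝ}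
  {α : ℕ → ℝ}

lemma eps_pos (H : EIRL1 n p lam β Lf μ αbar f x y ε α) : ∀ k i, 0 < ε k i
  | 0, i => H.hε0 i
  | k + 1, i => H.hεpos k i

lemma eps_succ_le (H : EIRL1 n p lam β Lf μ αbar f x y ε α) (k : ℕ) (i : Fin n) :
    ε (k + 1) i ≤ ε k i :=
  (H.hεdec k i).trans (mul_le_of_le_one_left (H.eps_pos k i).le H.hμ1.le)

lemma subObj_succ_le (H : EIRL1 n p lam β Lf μ αbar f x y ε α) (k : ℕ) (z : Vec n) :
    subObj n p lam β f (x k) (y k) (ε k) (x (k + 1)) ≤ subObj n p lam β f (x k) (y k) (ε k) z := by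
  rcases eq_or_ne z (x (k + 1)) with rfl | hz
  · exact le_rfl
  · exact (H.hmin k z hz).le

lemma norm_sub_extrapolation_sq_le (H : EIRL1 n p lam β Lf μ αbar f x y ε α) (k : ℕ) :
    ‖x k - y k‖ ^ 2 ≤ αbar ^ 2 * ‖x k - x (k - 1)‖ ^ 2 := by
  rw [H.hy k, sub_add_cancel_left, norm_neg, norm_smul, mul_pow, Real.norm_eq_abs, sq_abs]
  gcongr
  exacts [H.hα0 k, H.hα1 k]

lemma psiObj_succ_add_le (H : EIRL1 n p lam β Lf μ αbar f x y ε α) (k : ℕ) :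
    psiObj n p lam β f (x (k + 1)) (x k) (ε (k + 1))
        + β / 2 * (1 - αbar ^ 2) * ‖x k - x (k - 1)‖ ^ 2
      ≤ psiObj n p lam β f (x k) (x (k - 1)) (ε k) := by
  have hf : Differentiable ℝ f := H.hdiff.differentiable one_ne_zero
  have hgrowth := subObj_add_sq_norm_sub_le H.hp0.le H.hlam.le (fun i ↦ (H.eps_pos k i).le)
    (H.subObj_succ_le k) (x k)
  have hdescent := hf.le_add_inner_gradient_add_sq H.hlip (y k) (x (k + 1))
  have hconvex := H.hconv.add_inner_gradient_le (hf (y k)) (x k)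
  have hconcave := sum_rpow_abs_add_le (u := x k) (v := x (k + 1)) H.hp0.le H.hp1.le
    (H.eps_pos k) (fun i ↦ (H.eps_pos (k + 1) i).le) (H.eps_succ_le k)
  have hLβ : Lf / 2 * ‖x (k + 1) - y k‖ ^ 2 ≤ β / 2 * ‖x (k + 1) - y k‖ ^ 2 := by
    gcongr; exact H.hβ.le
  have hβ : 0 ≤ β / 2 := by linarith [H.hLf, H.hβ]
  rw [norm_sub_rev (x k) (x (k + 1))] at hgrowth
  simp only [psiObj, Fobj, subObj, inner_sub_right] at hgrowth hdescent hconvex ⊢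
  linarith [mul_le_mul_of_nonneg_left hconcave H.hlam.le,
    mul_le_mul_of_nonneg_left (H.norm_sub_extrapolation_sq_le k) hβ]

end EIRL1

/-- Lemma 2.1(i): sufficient decrease of the merit function. -/
theorem stmt_0 (n : ℕ) (p lam β Lf μ αbar : ℝ) (f : Vec n → ℝ)
    (x y : ℕ → Vec n) (ε : ℕ → Fin n → ℝ) (α : ℕ → ℝ)
    (H : EIRL1 n p lam β Lf μ αbar f x y ε α) :
    ∀ k ≥ 1,
      psiObj n p lam β f (x k) (x (k - 1)) (ε k)
          - psiObj n p lam β f (x (k + 1)) (x k) (ε (k + 1))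
        ≥ β / 2 * (1 - αbar ^ 2) * ‖x k - x (k - 1)‖ ^ 2 := by
  intro k _
  linarith [H.psiObj_succ_add_le k]
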